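/- arXiv:1904.09543 — 3 statements merged into one kernel-verified Lean document; each statement's English description precedes it below -/
import Mathlib

section
/- If two disks of radii r_d > 0 and r > 0 have centers at distance y with |r_d − r| ≤ y ≤ r_d + r, then the disk of radius (r + r_d − y)/2 centered at the point on the segment joining the two centers at distance (r_d − r + y)/2 from the center of the first disk is contained in the intersection of the two disks. Consequently the intersection area is at least π((r + r_d − y)/2)². -/
open MeasureTheory Metric Real Filter ProbabilityTheory Pointwise
open scoped ENNReal

noncomputable section

/-- The Euclidean plane. -/
abbrev E2 := EuclideanSpace ℝ (Fin 2)

/-- The point `(y, 0)` on the x-axis. -/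
def pt (y : ℝ) : E2 := (WithLp.equiv 2 (Fin 2 → ℝ)).symm ![y, 0]

/-- Area of the intersection (lens) of a disk of radius `a` centered at the origin and a disk
of radius `b` whose center is at distance `y` from the origin. -/
def lensArea (a b y : ℝ) : ℝ :=
  (volume (closedBall (0 : E2) a ∩ closedBall (pt y) b)).toReal

/-- The uniform probability measure on the closed disk `B(0, rd)`. -/
def unifBall (rd : ℝ) : Measure E2 :=
  (volume (closedBall (0 : E2) rd))⁻¹ • volume.restrict (closedBall (0 : E2) rd)

/-- Intensity measure `lf · Leb` restricted to the disk `B(0, rd)`. -/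
def ballIntensity (lf rd : ℝ) : Measure E2 :=
  ENNReal.ofReal lf • volume.restrict (closedBall (0 : E2) rd)

/-- `Φ` is a Poisson point process with (finite) intensity measure `Λ` under `P`:
counts on measurable sets are Poisson distributed with mean `Λ A`, and counts on
pairwise disjoint sets are independent. -/
def IsPoissonPP {Ω : Type*} [MeasurableSpace Ω] (P : Measure Ω) (Λ : Measure E2)
    (Φ : Ω → Finset E2) : Prop :=
  (∀ A : Set E2, MeasurableSet A →
      Measurable (fun ω => ((Φ ω : Set E2) ∩ A).ncard) ∧
      ∀ n : ℕ, P {ω | ((Φ ω : Set E2) ∩ A).ncard = n} = poissonPMF (Λ A).toNNReal n) ∧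
  (∀ (n : ℕ) (A : Fin n → Set E2), (∀ i, MeasurableSet (A i)) →
      Pairwise (Function.onFun Disjoint A) →
      iIndepFun (fun i ω => ((Φ ω : Set E2) ∩ A i).ncard) P)

/-- The Gauss error function. -/
def erf (x : ℝ) : ℝ := (2 / Real.sqrt π) * ∫ t in (0:ℝ)..x, Real.exp (-t ^ 2)

lemma dist_pt_pt (a b : ℝ) : dist (pt a) (pt b) = |a - b| := by
  simp [EuclideanSpace.dist_eq, pt, Fin.sum_univ_two, Real.sqrt_sq_eq_abs, Real.dist_eq]

lemma pt_zero : pt 0 = 0 := by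
  ext i
  fin_cases i <;> simp [pt]

lemma closedBall_pt_subset_closedBall_pt {a b ρ R : ℝ} (h : ρ + |a - b| ≤ R) :
    closedBall (pt a) ρ ⊆ closedBall (pt b) R :=
  closedBall_subset_closedBall' (by rwa [dist_pt_pt])

lemma EuclideanSpace.volume_closedBall_fin_two_of_nonneg (x : EuclideanSpace ℝ (Fin 2)) {ρ : ℝ}
    (hρ : 0 ≤ ρ) : volume (closedBall x ρ) = ENNReal.ofReal (π * ρ ^ 2) := by
  rw [EuclideanSpace.volume_closedBall_fin_two, ← ENNReal.ofReal_pow hρ,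
    ← ENNReal.ofReal_mul (by positivity), mul_comm]

theorem inscribed_disk_lower_bound_general (rd r y : ℝ)
    (hy1 : |rd - r| ≤ y) (hy2 : y ≤ rd + r) :
    closedBall (pt ((rd - r + y) / 2)) ((r + rd - y) / 2) ⊆
        closedBall (0 : E2) rd ∩ closedBall (pt y) r ∧
      ENNReal.ofReal (π * ((r + rd - y) / 2) ^ 2) ≤
        volume (closedBall (0 : E2) rd ∩ closedBall (pt y) r) := by
  obtain ⟨hy_left, hy_right⟩ := abs_le.mp hy1
  -- The small disk is internally tangent to both: its centre `c` and radius `ρ` satisfy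
  -- `c + ρ = rd` and `(y - c) + ρ = r`.
  have hsub : closedBall (pt ((rd - r + y) / 2)) ((r + rd - y) / 2) ⊆
      closedBall (0 : E2) rd ∩ closedBall (pt y) r := by
    refine Set.subset_inter ?_ (closedBall_pt_subset_closedBall_pt ?_)
    · rw [← pt_zero]
      refine closedBall_pt_subset_closedBall_pt ?_
      rw [sub_zero, abs_of_nonneg (by linarith)]
      linarith
    · rw [abs_of_nonpos (by linarith)]
      linarith
  refine ⟨hsub, ?_⟩
  rw [← EuclideanSpace.volume_closedBall_fin_two_of_nonneg _ (by linarith)]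
  exact measure_mono hsub

theorem inscribed_disk_lower_bound (rd r y : ℝ) (hrd : 0 < rd) (hr : 0 < r)
    (hy1 : |rd - r| ≤ y) (hy2 : y ≤ rd + r) :
    closedBall (pt ((rd - r + y) / 2)) ((r + rd - y) / 2) ⊆
        closedBall (0 : E2) rd ∩ closedBall (pt y) r ∧
      ENNReal.ofReal (π * ((r + rd - y) / 2) ^ 2) ≤
        volume (closedBall (0 : E2) rd ∩ closedBall (pt y) r) :=
  inscribed_disk_lower_bound_general rd r y hy1 hy2
end
end

section
/- For the integral F(r) = 1 − ∫₀^{r_d} e^{−λ_f min(π r², π r_d², A(r,r_d,y))}(2y/r_d²) dy with 0 < r ≤ 2r_d, replacing the lens area A(r,r_d,y) on the range |r_d − r| ≤ y ≤ r_d by its rectangle upper bound (r + r_d − y)·2min(r, r_d) yields an explicit upper bound: F(r) ≤ 1 − [A₀(r) + (2/(α r_d²))(e^{−α r}(r_d − 1/α) + e^{−α²/λ_f}(1/α − |r_d − r|))], where α = 2λ_f min(r, r_d) and A₀(r) = e^{−λ_f min(π r², π r_d²)}(r_d − r)²/r_d². -/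
/-! The lens of two disks with radii `r`, `rd` and centre distance `y` has area at most
`min (π r²) (π rd²)`, and for `y ≤ r + rd` it also lies in the rectangle
`[y - rd, r] × [-min r rd, min r rd]`. As `t ↦ exp (-lf t)` is antitone, the first bound
gives the integrand at least `exp (-lf min (π r²) (π rd²)) · 2y/rd²` on `[0, |rd - r|]`, which
integrates to `A0`, and the second gives it at least `exp (α (y - (r + rd))) · 2y/rd²` on
`[|rd - r|, rd]`, which integrates in closed form. The value at the lower endpoint is
`exp (-α²/lf)` because `r + rd - |rd - r| = 2 min r rd`. -/

open MeasureTheory Metric Real Filter ProbabilityTheory Pointwise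
open scoped ENNReal

noncomputable section

theorem volume_toLp_symm_preimage_pi_Icc {ι : Type*} [Fintype ι] (l u : ι → ℝ) :
    volume ((MeasurableEquiv.toLp 2 (ι → ℝ)).symm ⁻¹'
        Set.univ.pi fun i => Set.Icc (l i) (u i)) =
      ∏ i, ENNReal.ofReal (u i - l i) := by
  rw [(EuclideanSpace.volume_preserving_symm_measurableEquiv_toLp ι).measure_preimage
    (MeasurableSet.univ_pi fun _ => measurableSet_Icc).nullMeasurableSet, volume_pi_pi]
  simp only [Real.volume_Icc]

theorem pt_apply_zero (y : ℝ) : pt y 0 = y := rfl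

theorem pt_apply_one (y : ℝ) : pt y 1 = 0 := rfl

theorem closedBall_inter_closedBall_pt_subset (a b y : ℝ) :
    closedBall (0 : E2) a ∩ closedBall (pt y) b ⊆
      (MeasurableEquiv.toLp 2 (Fin 2 → ℝ)).symm ⁻¹'
        Set.univ.pi fun i => Set.Icc (![y - b, -min a b] i) (![a, min a b] i) := by
  rintro x ⟨hxa, hxb⟩
  rw [mem_closedBall, dist_zero_right] at hxa
  rw [mem_closedBall, dist_eq_norm] at hxb
  have hx_a (i : Fin 2) : |x i| ≤ a := (PiLp.norm_apply_le x i).trans hxa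
  have hx_b (i : Fin 2) : |x i - pt y i| ≤ b := (PiLp.norm_apply_le (x - pt y) i).trans hxb
  have h0a := abs_le.1 (hx_a 0)
  have h1a := abs_le.1 (hx_a 1)
  have h0b := abs_le.1 (hx_b 0)
  have h1b := abs_le.1 (hx_b 1)
  rw [pt_apply_zero] at h0b
  rw [pt_apply_one, sub_zero] at h1b
  intro i _
  fin_cases i
  · exact ⟨by simpa using h0b.1, by simpa using h0a.2⟩
  · refine ⟨?_, ?_⟩
    · simpa using neg_le.1 (le_min (neg_le.1 h1a.1) (neg_le.1 h1b.1))
    · simpa using le_min h1a.2 h1b.2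

theorem lensArea_le (a b y : ℝ) (ha : 0 ≤ a) (hb : 0 ≤ b) (hy : y ≤ a + b) :
    lensArea a b y ≤ (a + b - y) * (2 * min a b) := by
  have hm : 0 ≤ min a b := le_min ha hb
  have hvol := volume_toLp_symm_preimage_pi_Icc ![y - b, -min a b] ![a, min a b]
  simp only [Fin.prod_univ_two, Matrix.cons_val_zero, Matrix.cons_val_one] at hvol
  calc lensArea a b y
      ≤ (ENNReal.ofReal (a - (y - b)) * ENNReal.ofReal (min a b - -min a b)).toReal := by
        rw [← hvol]
        exact ENNReal.toReal_mono (hvol ▸ by finiteness)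
          (measure_mono (closedBall_inter_closedBall_pt_subset a b y))
    _ = (a + b - y) * (2 * min a b) := by
        rw [ENNReal.toReal_mul, ENNReal.toReal_ofReal (by linarith),
          ENNReal.toReal_ofReal (by linarith)]
        ring

theorem continuous_pt : Continuous pt :=
  (PiLp.continuous_toLp 2 _).comp <| continuous_pi fun i => by
    fin_cases i
    · exact continuous_id
    · exact continuous_const

theorem measurable_lensArea (a b : ℝ) : Measurable (lensArea a b) := by
  have hlens :
      MeasurableSet {p : ℝ × E2 | p.2 ∈ closedBall 0 a ∧ p.2 ∈ closedBall (pt p.1) b} :=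
    (isClosed_le (by fun_prop) continuous_const).inter
      (isClosed_le (continuous_snd.dist (continuous_pt.comp continuous_fst)) continuous_const)
      |>.measurableSet
  exact (measurable_measure_prodMk_left (ν := volume) hlens).ennreal_toReal

theorem lensArea_nonneg (a b y : ℝ) : 0 ≤ lensArea a b y := ENNReal.toReal_nonneg

theorem intervalIntegrable_exp_neg_mul_mul {c : ℝ} {φ g : ℝ → ℝ} (hc : 0 ≤ c)
    (hφ : Measurable φ) (hφ0 : ∀ y, 0 ≤ φ y) (hg : Continuous g) (a b : ℝ) :
    IntervalIntegrable (fun y => exp (-(c * φ y)) * g y) volume a b := by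
  refine (hg.abs.intervalIntegrable a b).mono_fun'
    (by fun_prop : Measurable fun y => exp (-(c * φ y)) * g y).aestronglyMeasurable
    (ae_of_all _ fun y => ?_)
  dsimp only
  rw [norm_mul, Real.norm_of_nonneg (exp_pos _).le, Real.norm_eq_abs]
  exact mul_le_of_le_one_left (abs_nonneg _) (exp_le_one_iff.2 (by nlinarith [hφ0 y]))

theorem integral_exp_mul_sub_mul_id {α : ℝ} (hα : α ≠ 0) (c a b : ℝ) :
    ∫ y in a..b, exp (α * (y - c)) * y =
      (exp (α * (b - c)) * (b - 1 / α) - exp (α * (a - c)) * (a - 1 / α)) / α := by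
  have hderiv (y : ℝ) : HasDerivAt (fun y => exp (α * (y - c)) * (y - 1 / α) / α)
      (exp (α * (y - c)) * y) y := by
    have hexp : HasDerivAt (fun y => exp (α * (y - c))) (exp (α * (y - c)) * α) y := by
      simpa using (((hasDerivAt_id y).sub_const c).const_mul α).exp
    refine ((hexp.mul ((hasDerivAt_id' y).sub_const (1 / α))).div_const α).congr_deriv ?_
    field_simp
    ring
  rw [intervalIntegral.integral_eq_sub_of_hasDerivAt (fun y _ => hderiv y)
    ((by fun_prop : Continuous fun y => exp (α * (y - c)) * y).intervalIntegrable a b)]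
  ring

theorem abs_sub_sub_add_eq_neg_two_mul_min (a b : ℝ) : |b - a| - (a + b) = -(2 * min a b) := by
  rw [← max_sub_min_eq_abs, ← min_add_max]
  ring

section Contact

variable {lf r rd : ℝ}

def contactIntegrand (lf r rd y : ℝ) : ℝ :=
  exp (-(lf * min (min (π * r ^ 2) (π * rd ^ 2)) (lensArea r rd y))) * (2 * y / rd ^ 2)

theorem intervalIntegrable_contactIntegrand (hlf : 0 ≤ lf) (a b : ℝ) :
    IntervalIntegrable (contactIntegrand lf r rd) volume a b :=
  intervalIntegrable_exp_neg_mul_mul hlf (measurable_const.min (measurable_lensArea r rd))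
    (fun y => le_min (by positivity) (lensArea_nonneg r rd y)) (by fun_prop) a b

theorem exp_mul_sq_div_le_integral_contactIntegrand (hlf : 0 ≤ lf) {L : ℝ} (hL : 0 ≤ L) :
    exp (-(lf * min (π * r ^ 2) (π * rd ^ 2))) * L ^ 2 / rd ^ 2 ≤
      ∫ y in (0:ℝ)..L, contactIntegrand lf r rd y := by
  calc _ = ∫ y in (0:ℝ)..L,
        exp (-(lf * min (π * r ^ 2) (π * rd ^ 2))) * (2 * y / rd ^ 2) := by
        rw [intervalIntegral.integral_const_mul, intervalIntegral.integral_div,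
          intervalIntegral.integral_const_mul, integral_id]
        ring
    _ ≤ _ := by
        refine intervalIntegral.integral_mono_on hL
          (Continuous.intervalIntegrable (by fun_prop) _ _)
          (intervalIntegrable_contactIntegrand hlf 0 L) fun y hy => ?_
        have : 0 ≤ y := hy.1
        unfold contactIntegrand
        gcongr exp (-(_ * ?_)) * _
        exact min_le_left _ _

theorem integral_exp_le_integral_contactIntegrand (hlf : 0 ≤ lf) (hr : 0 ≤ r) (hrd : 0 ≤ rd)
    {a b : ℝ} (ha : 0 ≤ a) (hab : a ≤ b) (hb : b ≤ r + rd) :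
    ∫ y in a..b, 2 / rd ^ 2 * (exp (2 * lf * min r rd * (y - (r + rd))) * y) ≤
      ∫ y in a..b, contactIntegrand lf r rd y := by
  refine intervalIntegral.integral_mono_on hab (Continuous.intervalIntegrable (by fun_prop) _ _)
    (intervalIntegrable_contactIntegrand hlf a b) fun y hy => ?_
  have : 0 ≤ y := ha.trans hy.1
  have hlens := lensArea_le r rd y hr hrd (hy.2.trans hb)
  calc _ = exp (-(lf * ((r + rd - y) * (2 * min r rd)))) * (2 * y / rd ^ 2) := by ring_nf
    _ ≤ _ := by
        unfold contactIntegrand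
        gcongr
        exact (min_le_right _ _).trans hlens

end Contact

theorem contact_cdf_explicit_upper_bound (lf rd r : ℝ) (hlf : 0 < lf) (hrd : 0 < rd)
    (hr0 : 0 < r) (hr2 : r ≤ 2 * rd) (α A0 : ℝ)
    (hα : α = 2 * lf * min r rd)
    (hA0 : A0 = Real.exp (-(lf * min (π * r ^ 2) (π * rd ^ 2))) * (rd - r) ^ 2 / rd ^ 2) :
    1 - ∫ y in (0:ℝ)..rd,
        Real.exp (-(lf * min (min (π * r ^ 2) (π * rd ^ 2)) (lensArea r rd y))) *
          (2 * y / rd ^ 2) ≤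
      1 - (A0 + (2 / (α * rd ^ 2)) *
        (Real.exp (-(α * r)) * (rd - 1 / α) +
          Real.exp (-(α ^ 2 / lf)) * (1 / α - |rd - r|))) := by
  change 1 - ∫ y in (0:ℝ)..rd, contactIntegrand lf r rd y ≤ _
  set L := |rd - r|
  have hL : 0 ≤ L ∧ L ≤ rd := ⟨abs_nonneg _, abs_le.2 ⟨by linarith, by linarith⟩⟩
  have hα0 : 0 < α := by rw [hα]; positivity
  have hhead : A0 ≤ ∫ y in (0:ℝ)..L, contactIntegrand lf r rd y := by
    rw [hA0, ← sq_abs (rd - r)]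
    exact exp_mul_sq_div_le_integral_contactIntegrand hlf.le hL.1
  have hexponent : α * (L - (r + rd)) = -(α ^ 2 / lf) := by
    rw [abs_sub_sub_add_eq_neg_two_mul_min, hα]
    field_simp
  have htail : (2 / (α * rd ^ 2)) * (exp (-(α * r)) * (rd - 1 / α) +
      exp (-(α ^ 2 / lf)) * (1 / α - L)) ≤ ∫ y in L..rd, contactIntegrand lf r rd y := by
    refine le_of_eq_of_le ?_ (hα ▸ integral_exp_le_integral_contactIntegrand hlf.le hr0.le hrd.le
      hL.1 hL.2 (by linarith))
    rw [intervalIntegral.integral_const_mul, integral_exp_mul_sub_mul_id hα0.ne', hexponent,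
      show rd - (r + rd) = -r by ring]
    field_simp
    ring
  rw [← intervalIntegral.integral_add_adjacent_intervals
    (intervalIntegrable_contactIntegrand hlf.le 0 L)
    (intervalIntegrable_contactIntegrand hlf.le L rd)]
  linarith
end
end

section
/- For the same setup, replacing the lens area A(r,r_d,y) on |r_d − r| ≤ y ≤ r_d by its inscribed-disk lower bound π((r + r_d − y)/2)² yields the lower bound: F(r) ≥ 1 − [A₀(r) + (2(r_d + r)/(r_d²√λ_f))(erf(−(r/2)√(λ_f π)) − erf(−(α/2)√(π/λ_f))) + (4/(π r_d² λ_f))(e^{−π α²/(4λ_f)} − e^{−λ_f π r²/4})], with α = 2λ_f min(r, r_d) and A₀(r) = e^{−λ_f min(π r², π r_d²)}(r_d − r)²/r_d². -/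
open MeasureTheory Metric Real Filter ProbabilityTheory Pointwise
open scoped ENNReal

noncomputable section

/-!
For `y ≤ |rd - r|` one of the two disks contains the other, so the lens area is the smaller disk
area and the integrand on `[0, |rd - r|]` integrates to `A0`. For `|rd - r| ≤ y ≤ rd` the lens
contains the disk with diameter `[y - rd, r]`, so the integrand is bounded by a Gaussian in
`y - (r + rd)` times the linear weight `2y / rd²`; such a product has an explicit antiderivative
in terms of `erf`, which yields the remaining two terms.
-/

lemma toReal_volume_closedBall (x : E2) {R : ℝ} (hR : 0 ≤ R) :
    (volume (closedBall x R)).toReal = π * R ^ 2 := by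
  rw [EuclideanSpace.volume_closedBall_fin_two, ENNReal.toReal_mul, ENNReal.toReal_pow,
    ENNReal.toReal_ofReal hR, ENNReal.toReal_ofReal pi_nonneg, mul_comm]

lemma lensArea_of_le_abs_sub {r rd y : ℝ} (hr : 0 ≤ r) (hrd : 0 ≤ rd) (hy : 0 ≤ y)
    (hy' : y ≤ |rd - r|) : lensArea r rd y = min (π * r ^ 2) (π * rd ^ 2) := by
  have hdist : dist (pt 0) (pt y) = y := by rw [dist_pt_pt, zero_sub, abs_neg, abs_of_nonneg hy]
  rw [lensArea, ← pt_zero]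
  rcases le_total r rd with h | h
  · rw [abs_of_nonneg (sub_nonneg.2 h)] at hy'
    have hsub : closedBall (pt 0) r ⊆ closedBall (pt y) rd :=
      closedBall_subset_closedBall' (by linarith)
    rw [Set.inter_eq_self_of_subset_left hsub, toReal_volume_closedBall _ hr,
      min_eq_left (by gcongr)]
  · rw [abs_of_nonpos (sub_nonpos.2 h)] at hy'
    have hsub : closedBall (pt y) rd ⊆ closedBall (pt 0) r :=
      closedBall_subset_closedBall' (by rw [dist_comm]; linarith)
    rw [Set.inter_eq_self_of_subset_right hsub, toReal_volume_closedBall _ hrd,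
      min_eq_right (by gcongr)]

/-- The lens meets the x-axis in the segment `[y - rd, r]`; this is the area of the disk having
that segment as a diameter. -/
def inscribedDiskArea (r rd y : ℝ) : ℝ := π * ((r + rd - y) / 2) ^ 2

lemma inscribedDiskArea_le_lensArea {r rd y : ℝ} (h₁ : |rd - r| ≤ y) (h₂ : y ≤ r + rd) :
    inscribedDiskArea r rd y ≤ lensArea r rd y := by
  obtain ⟨h₁l, h₁r⟩ := abs_le.1 h₁
  set ρ := (r + rd - y) / 2
  have hρ : 0 ≤ ρ := by simp only [ρ]; linarith
  have hsub : closedBall (pt (r - ρ)) ρ ⊆ closedBall (pt 0) r ∩ closedBall (pt y) rd := by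
    refine Set.subset_inter (closedBall_subset_closedBall' ?_) (closedBall_subset_closedBall' ?_)
    · rw [dist_pt_pt, abs_of_nonneg (by simp only [ρ]; linarith)]; linarith
    · rw [dist_pt_pt, abs_of_nonpos (by simp only [ρ]; linarith)]; simp only [ρ]; linarith
  have hfin : volume (closedBall (pt 0) r ∩ closedBall (pt y) rd) ≠ ⊤ :=
    ((measure_mono Set.inter_subset_left).trans_lt measure_closedBall_lt_top).ne
  calc inscribedDiskArea r rd y = (volume (closedBall (pt (r - ρ)) ρ)).toReal :=
        (toReal_volume_closedBall _ hρ).symm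
    _ ≤ lensArea r rd y := by rw [lensArea, ← pt_zero]; exact measureReal_mono hsub hfin

lemma inscribedDiskArea_le_min_lensArea {r rd y : ℝ} (h₁ : |rd - r| ≤ y) (h₂ : y ≤ r + rd) :
    inscribedDiskArea r rd y ≤ min (min (π * r ^ 2) (π * rd ^ 2)) (lensArea r rd y) := by
  obtain ⟨h₁l, h₁r⟩ := abs_le.1 h₁
  have hρ : 0 ≤ (r + rd - y) / 2 := by linarith
  exact le_min (le_min (by unfold inscribedDiskArea; gcongr; linarith)
    (by unfold inscribedDiskArea; gcongr; linarith)) (inscribedDiskArea_le_lensArea h₁ h₂)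

lemma hasDerivAt_erf (x : ℝ) : HasDerivAt erf (2 / √π * exp (-x ^ 2)) x := by
  have hc : Continuous fun t : ℝ => exp (-t ^ 2) := by fun_prop
  exact (intervalIntegral.integral_hasDerivAt_right (hc.intervalIntegrable _ _)
    hc.aestronglyMeasurable.stronglyMeasurableAtFilter hc.continuousAt).const_mul _

lemma integral_exp_neg_sq_mul_id {k : ℝ} (hk : k ≠ 0) (s a b : ℝ) :
    ∫ y in a..b, exp (-(k * (y - s)) ^ 2) * y =
      s * √π / (2 * k) * (erf (k * (b - s)) - erf (k * (a - s))) -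
        (exp (-(k * (b - s)) ^ 2) - exp (-(k * (a - s)) ^ 2)) / (2 * k ^ 2) := by
  have hG : ∀ y, HasDerivAt
      (fun y => s * √π / (2 * k) * erf (k * (y - s)) - exp (-(k * (y - s)) ^ 2) / (2 * k ^ 2))
      (exp (-(k * (y - s)) ^ 2) * y) y := by
    intro y
    have hlin : HasDerivAt (fun y => k * (y - s)) k y := by
      simpa using ((hasDerivAt_id y).sub_const s).const_mul k
    have herf : HasDerivAt (fun y => erf (k * (y - s)))
        (2 / √π * exp (-(k * (y - s)) ^ 2) * k) y := (hasDerivAt_erf _).comp y hlin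
    have hexp : HasDerivAt (fun y => exp (-(k * (y - s)) ^ 2))
        (exp (-(k * (y - s)) ^ 2) * -(2 * (k * (y - s)) ^ (2 - 1) * k)) y :=
      ((hlin.fun_pow 2).neg).exp
    refine ((herf.const_mul (s * √π / (2 * k))).sub (hexp.div_const (2 * k ^ 2))).congr_deriv ?_
    field_simp
    ring
  rw [intervalIntegral.integral_eq_sub_of_hasDerivAt (fun y _ => hG y)
    ((by fun_prop : Continuous fun y => exp (-(k * (y - s)) ^ 2) * y).intervalIntegrable _ _)]
  ring

lemma integral_exp_neg_inscribedDiskArea {lf : ℝ} (hlf : 0 < lf) (r rd : ℝ) {α : ℝ}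
    (hα : α = 2 * lf * min r rd) :
    ∫ y in |rd - r|..rd, exp (-(lf * inscribedDiskArea r rd y)) * (2 * y / rd ^ 2) =
      2 * (rd + r) / (rd ^ 2 * √lf) *
          (erf (-(r / 2) * √(lf * π)) - erf (-(α / 2) * √(π / lf))) +
        4 / (π * rd ^ 2 * lf) * (exp (-(π * α ^ 2 / (4 * lf))) - exp (-(lf * π * r ^ 2 / 4))) := by
  set k := √(lf * π) / 2
  have hk : k ≠ 0 := by positivity
  have hk_sq (t : ℝ) : (k * t) ^ 2 = lf * π * t ^ 2 / 4 := by
    rw [mul_pow, div_pow, sq_sqrt (by positivity)]; ring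
  have hk₂ : k ^ 2 = lf * π / 4 := by simpa using hk_sq 1
  have hd : |rd - r| - (r + rd) = -(2 * min r rd) := by
    rw [← max_sub_min_eq_abs r rd]; linarith [min_add_max r rd]
  have hsqrt : √(lf * π) = √lf * √π := sqrt_mul hlf.le π
  have h_erf₁ : -(r / 2) * √(lf * π) = k * (rd - (r + rd)) := by simp only [k]; ring
  have h_erf₂ : -(α / 2) * √(π / lf) = k * (|rd - r| - (r + rd)) := by
    rw [hd, hα, sqrt_div' _ hlf.le]
    simp only [k]
    rw [hsqrt]
    field_simp
    rw [sq_sqrt hlf.le]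
    ring
  have h_exp₁ : -(lf * π * r ^ 2 / 4) = -(k * (rd - (r + rd))) ^ 2 := by rw [hk_sq]; ring
  have h_exp₂ : -(π * α ^ 2 / (4 * lf)) = -(k * (|rd - r| - (r + rd))) ^ 2 := by
    rw [hk_sq, hd, hα]; field_simp
  have h_integrand (y : ℝ) : exp (-(lf * inscribedDiskArea r rd y)) * (2 * y / rd ^ 2) =
      2 / rd ^ 2 * (exp (-(k * (y - (r + rd))) ^ 2) * y) := by
    rw [hk_sq, inscribedDiskArea]
    ring_nf
  simp_rw [h_integrand]
  rw [intervalIntegral.integral_const_mul, integral_exp_neg_sq_mul_id hk, h_erf₁, h_erf₂, h_exp₁,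
    h_exp₂, hk₂]
  simp only [k]
  rw [hsqrt]
  field_simp
  ring

lemma intervalIntegral_le_add_of_le_on_Icc {f g₁ g₂ : ℝ → ℝ} {a b c : ℝ} (hab : a ≤ b)
    (hbc : b ≤ c) (hg₁ : IntervalIntegrable g₁ volume a b) (hg₂ : IntervalIntegrable g₂ volume b c)
    (hf : ∀ y ∈ Set.Icc a c, 0 ≤ f y) (h₁ : ∀ y ∈ Set.Icc a b, f y ≤ g₁ y)
    (h₂ : ∀ y ∈ Set.Icc b c, f y ≤ g₂ y) :
    ∫ y in a..c, f y ≤ (∫ y in a..b, g₁ y) + ∫ y in b..c, g₂ y := by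
  -- If `f` is not integrable, its integral is the junk value `0` and `0 ≤ f ≤ gᵢ` suffices.
  by_cases hfi : IntervalIntegrable f volume a c
  · have hf₁ := hfi.mono_set (Set.uIcc_subset_uIcc Set.left_mem_uIcc (Set.mem_uIcc_of_le hab hbc))
    have hf₂ := hfi.mono_set (Set.uIcc_subset_uIcc (Set.mem_uIcc_of_le hab hbc) Set.right_mem_uIcc)
    rw [← intervalIntegral.integral_add_adjacent_intervals hf₁ hf₂]
    exact add_le_add (intervalIntegral.integral_mono_on hab hf₁ hg₁ h₁)
      (intervalIntegral.integral_mono_on hbc hf₂ hg₂ h₂)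
  · rw [intervalIntegral.integral_undef hfi]
    exact add_nonneg
      (intervalIntegral.integral_nonneg hab fun y hy =>
        (hf y ⟨hy.1, hy.2.trans hbc⟩).trans (h₁ y hy))
      (intervalIntegral.integral_nonneg hbc fun y hy =>
        (hf y ⟨hab.trans hy.1, hy.2⟩).trans (h₂ y hy))

theorem contact_cdf_explicit_lower_bound (lf rd r : ℝ) (hlf : 0 < lf) (hrd : 0 < rd)
    (hr0 : 0 < r) (hr2 : r ≤ 2 * rd) (α A0 : ℝ)
    (hα : α = 2 * lf * min r rd)
    (hA0 : A0 = Real.exp (-(lf * min (π * r ^ 2) (π * rd ^ 2))) * (rd - r) ^ 2 / rd ^ 2) :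
    1 - (A0 + (2 * (rd + r) / (rd ^ 2 * Real.sqrt lf)) *
          (erf (-(r / 2) * Real.sqrt (lf * π)) - erf (-(α / 2) * Real.sqrt (π / lf))) +
        (4 / (π * rd ^ 2 * lf)) *
          (Real.exp (-(π * α ^ 2 / (4 * lf))) - Real.exp (-(lf * π * r ^ 2 / 4)))) ≤
      1 - ∫ y in (0:ℝ)..rd,
        Real.exp (-(lf * min (min (π * r ^ 2) (π * rd ^ 2)) (lensArea r rd y))) *
          (2 * y / rd ^ 2) := by
  set M := min (π * r ^ 2) (π * rd ^ 2)
  have hd0 : 0 ≤ |rd - r| := abs_nonneg _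
  have hdrd : |rd - r| ≤ rd := abs_le.2 ⟨by linarith, by linarith⟩
  have hbound := intervalIntegral_le_add_of_le_on_Icc hd0 hdrd
    (f := fun y => exp (-(lf * min M (lensArea r rd y))) * (2 * y / rd ^ 2))
    (g₁ := fun y => exp (-(lf * M)) * (2 * y / rd ^ 2))
    (g₂ := fun y => exp (-(lf * inscribedDiskArea r rd y)) * (2 * y / rd ^ 2))
    (Continuous.intervalIntegrable (by fun_prop) _ _)
    (Continuous.intervalIntegrable (by unfold inscribedDiskArea; fun_prop) _ _)
    (fun y hy => by have := hy.1; positivity)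
    (fun y hy => by rw [lensArea_of_le_abs_sub hr0.le hrd.le hy.1 hy.2, min_self])
    (fun y hy => by
      have hy0 : 0 ≤ y := hd0.trans hy.1
      have := inscribedDiskArea_le_min_lensArea hy.1 (by linarith [hy.2])
      gcongr)
  have hfirst : ∫ y in (0:ℝ)..|rd - r|, exp (-(lf * M)) * (2 * y / rd ^ 2) = A0 := by
    rw [intervalIntegral.integral_const_mul, intervalIntegral.integral_div,
      intervalIntegral.integral_const_mul, integral_id, sq_abs, hA0]
    ring
  rw [hfirst, integral_exp_neg_inscribedDiskArea hlf r rd hα] at hbound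
  linarith
end
end
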